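/- For every distributive lattice D, the set Mea(D) of Γ-valued measures on D is a closed subspace of the product space Γ^D, and hence is itself a Priestley space. -/

import Mathlib

open scoped Classical

noncomputable section

/-- Validity predicate: `(r, false)` encodes `r⁻` for `r ∈ (0,1]`;
`(q, true)` encodes `q°` for rational `q ∈ [0,1]`. -/
def GammaValid (x : ℝ × Bool) : Prop :=
  (x.2 = false ∧ 0 < x.1 ∧ x.1 ≤ 1) ∨
  (x.2 = true ∧ 0 ≤ x.1 ∧ x.1 ≤ 1 ∧ ∃ q : ℚ, (q : ℝ) = x.1)

lemma gammaValid_of (r : ℝ) (b : Bool) (h0 : 0 ≤ r) (h1 : r ≤ 1)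
    (hr : b = true → ∃ q : ℚ, (q : ℝ) = r) (hm : b = false → 0 < r) :
    GammaValid (r, b) := by
  cases b
  · exact Or.inl ⟨rfl, hm rfl, h1⟩
  · exact Or.inr ⟨rfl, h0, h1, hr rfl⟩

/-- The doubled unit interval `Γ`, ordered lexicographically:
compare real values first, and `r⁻ < r°` at equal value. -/
abbrev Gamma : Type := {x : Lex (ℝ × Bool) // GammaValid (ofLex x)}

def Gamma.re (x : Gamma) : ℝ := (ofLex x.1).1
def Gamma.tag (x : Gamma) : Bool := (ofLex x.1).2

def Gamma.mk' (r : ℝ) (b : Bool) (h : GammaValid (r, b)) : Gamma := ⟨toLex (r, b), h⟩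

@[simp] lemma Gamma.re_mk' (r : ℝ) (b : Bool) (h : GammaValid (r, b)) :
    (Gamma.mk' r b h).re = r := rfl
@[simp] lemma Gamma.tag_mk' (r : ℝ) (b : Bool) (h : GammaValid (r, b)) :
    (Gamma.mk' r b h).tag = b := rfl

/-- `0°` -/
def gzero : Gamma :=
  Gamma.mk' 0 true (gammaValid_of _ _ le_rfl zero_le_one (fun _ => ⟨0, by norm_num⟩) (by simp))

/-- `1°` -/
def gone : Gamma :=
  Gamma.mk' 1 true (gammaValid_of _ _ zero_le_one le_rfl (fun _ => ⟨1, by norm_num⟩) (by simp))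

/-- `q°` for a rational `q ∈ [0,1]`. -/
def mkCirc (q : ℚ) (h0 : 0 ≤ q) (h1 : q ≤ 1) : Gamma :=
  Gamma.mk' (q : ℝ) true
    (gammaValid_of _ _ (by exact_mod_cast h0) (by exact_mod_cast h1)
      (fun _ => ⟨q, rfl⟩) (by simp))

/-- `r⁻` for a real `r ∈ (0,1]`. -/
def mkMinus (r : ℝ) (h0 : 0 < r) (h1 : r ≤ 1) : Gamma :=
  Gamma.mk' r false
    (gammaValid_of _ _ h0.le h1 (by simp) (fun _ => h0))

lemma Gamma.le_iff {x y : Gamma} :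
    x ≤ y ↔ x.re < y.re ∨ (x.re = y.re ∧ x.tag ≤ y.tag) := by
  change x.1 ≤ y.1 ↔ _
  rw [show x.1 = toLex (ofLex x.1) from rfl, show y.1 = toLex (ofLex y.1) from rfl,
    Prod.Lex.le_iff]
  rfl

lemma Gamma.re_nonneg (x : Gamma) : 0 ≤ x.re := by
  rcases x.2 with ⟨_, h, _⟩ | ⟨_, h, _⟩ <;> [exact le_of_lt h; exact h]

lemma Gamma.re_le_one (x : Gamma) : x.re ≤ 1 := by
  rcases x.2 with ⟨_, _, h⟩ | ⟨_, _, h, _⟩ <;> exact h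

lemma Gamma.tag_rat {x : Gamma} (h : x.tag = true) : ∃ q : ℚ, (q : ℝ) = x.re := by
  rcases x.2 with ⟨h', _⟩ | ⟨_, _, _, hq⟩
  · exact absurd (h'.symm.trans h) (by simp)
  · exact hq

lemma Gamma.tag_pos {x : Gamma} (h : x.tag = false) : 0 < x.re := by
  rcases x.2 with ⟨_, h', _⟩ | ⟨h', _⟩
  · exact h'
  · exact absurd (h'.symm.trans h) (by simp)

lemma Gamma.re_mono {x y : Gamma} (h : x ≤ y) : x.re ≤ y.re := by
  rcases Gamma.le_iff.1 h with h | ⟨h, _⟩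
  · exact le_of_lt h
  · exact le_of_eq h

lemma Gamma.ext' {x y : Gamma} (hre : x.re = y.re) (htag : x.tag = y.tag) : x = y := by
  apply Subtype.ext
  have hx : x.1 = toLex (x.re, x.tag) := rfl
  have hy : y.1 = toLex (y.re, y.tag) := rfl
  rw [hx, hy, hre, htag]

/-- The partial minus `∸` on `Γ`, made total by returning `0°` outside its domain
`{(x,y) | y ≤ x}`.  On the domain:  `r° ∸ s° = (r−s)°`, `r⁻ ∸ s° = (r−s)⁻`, and
`r° ∸ s⁻ = r⁻ ∸ s⁻ = (r−s)°` if `r−s ∈ ℚ`, `(r−s)⁻` otherwise. -/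
def gsub (x y : Gamma) : Gamma :=
  if h : y ≤ x then
    Gamma.mk' (x.re - y.re)
      (if y.tag then x.tag else if (∃ q : ℚ, (q : ℝ) = x.re - y.re) then true else false)
      (by
        have hle : y.re ≤ x.re := Gamma.re_mono h
        have hx1 := x.re_le_one
        have hy0 := y.re_nonneg
        apply gammaValid_of _ _ (by linarith) (by linarith)
        · intro ht
          split_ifs at ht with hy hq
          · obtain ⟨qx, hqx⟩ := Gamma.tag_rat ht
            obtain ⟨qy, hqy⟩ := Gamma.tag_rat hy
            exact ⟨qx - qy, by push_cast [hqx, hqy]; ring⟩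
          · exact hq
        · intro ht
          split_ifs at ht with hy hq
          · rcases Gamma.le_iff.1 h with hlt | ⟨_, htag⟩
            · linarith
            · rw [hy, ht] at htag; exact absurd htag (by decide)
          · refine lt_of_le_of_ne (by linarith) fun e => hq ⟨0, by rw [← e]; norm_num⟩)
  else gzero

/-- The derived operation `∸'` given by `x ∸' y = ⋁ {x ∸ q° ∣ y < q° ≤ x}`,
described here by its explicit formula (and again made total by `0°` off-domain). -/
def gsub' (x y : Gamma) : Gamma :=
  if h : y ≤ x then
    Gamma.mk' (x.re - y.re)
      (if x.re - y.re = 0 then true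
       else if (y.tag = false ∧ ∃ q : ℚ, (q : ℝ) = y.re) then x.tag else false)
      (by
        have hle : y.re ≤ x.re := Gamma.re_mono h
        have hx1 := x.re_le_one
        have hy0 := y.re_nonneg
        apply gammaValid_of _ _ (by linarith) (by linarith)
        · intro ht
          split_ifs at ht with h0 hc
          · exact ⟨0, by rw [h0]; norm_num⟩
          · obtain ⟨qx, hqx⟩ := Gamma.tag_rat ht
            obtain ⟨qy, hqy⟩ := hc.2
            exact ⟨qx - qy, by push_cast [hqx, hqy]; ring⟩
        · intro ht
          split_ifs at ht with h0 hc
          · exact lt_of_le_of_ne (by linarith) (Ne.symm h0)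
          · exact lt_of_le_of_ne (by linarith) (Ne.symm h0))
  else gzero

/-- The partial plus on `Γ` (total, with junk value `0°` when the sum exceeds `1`):
`r° + s° = (r+s)°` and any sum involving a `⁻`-element is a `⁻`-element. -/
def gadd (x y : Gamma) : Gamma :=
  if h : x.re + y.re ≤ 1 then
    Gamma.mk' (x.re + y.re) (x.tag && y.tag)
      (by
        have hx0 := x.re_nonneg
        have hy0 := y.re_nonneg
        apply gammaValid_of _ _ (by linarith) h
        · intro ht
          rw [Bool.and_eq_true] at ht
          obtain ⟨qx, hqx⟩ := Gamma.tag_rat ht.1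
          obtain ⟨qy, hqy⟩ := Gamma.tag_rat ht.2
          exact ⟨qx + qy, by push_cast [hqx, hqy]; ring⟩
        · intro ht
          rcases Bool.and_eq_false_iff.1 ht with hx | hy
          · have := Gamma.tag_pos hx; linarith
          · have := Gamma.tag_pos hy; linarith)
  else gzero

/-- Finite sums in `Γ` (total, with junk value `0°` when the real sum exceeds `1`):
real parts add up, and the result is a `°`-element iff every summand is. -/
def gsum {α : Type*} (s : Finset α) (f : α → Gamma) : Gamma :=
  if h : ∑ x ∈ s, (f x).re ≤ 1 then
    Gamma.mk' (∑ x ∈ s, (f x).re) (if ∀ x ∈ s, (f x).tag = true then true else false)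
      (by
        have h0 : 0 ≤ ∑ x ∈ s, (f x).re :=
          Finset.sum_nonneg fun x _ => (f x).re_nonneg
        apply gammaValid_of _ _ h0 h
        · intro ht
          split_ifs at ht with hall
          · have : ∀ x ∈ s, ∃ q : ℚ, (q : ℝ) = (f x).re := fun x hx => Gamma.tag_rat (hall x hx)
            choose g hg using this
            refine ⟨∑ x ∈ s.attach, g x.1 x.2, ?_⟩
            push_cast
            rw [← Finset.sum_attach s fun x => (f x).re]
            exact Finset.sum_congr rfl fun x _ => hg x.1 x.2
        · intro ht
          split_ifs at ht with hall
          · push_neg at hall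
            obtain ⟨x, hxs, hx⟩ := hall
            replace hx : (f x).tag = false := by
              cases hxt : (f x).tag
              · rfl
              · exact absurd hxt hx
            calc (0:ℝ) < (f x).re := Gamma.tag_pos hx
              _ ≤ _ := Finset.single_le_sum (fun y _ => (f y).re_nonneg) hxs)
  else gzero

/-- The collapsing map `γ : Γ → [0,1]`, `r⁻, r° ↦ r`. -/
def gammaMap (x : Gamma) : unitInterval := ⟨x.re, x.re_nonneg, x.re_le_one⟩

/-- The section `ι : [0,1] → Γ`: rationals go to `°`-elements, irrationals to `⁻`-elements. -/
def iota (r : unitInterval) : Gamma :=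
  if h : ∃ q : ℚ, (q : ℝ) = r.1 then
    Gamma.mk' r.1 true (gammaValid_of _ _ r.2.1 r.2.2 (fun _ => h) (by simp))
  else
    Gamma.mk' r.1 false
      (gammaValid_of _ _ r.2.1 r.2.2 (by simp)
        (fun _ => lt_of_le_of_ne r.2.1 fun e => h ⟨0, by rw [← e]; norm_num⟩))

/-- Subbasis for the Priestley topology on `Γ`: the sets `↑p°` (for `p ∈ ℚ ∩ [0,1]`) and
`↓q⁻` (for `q ∈ ℚ ∩ (0,1]`). -/
def gammaSubbasis : Set (Set Gamma) :=
  {S | ∃ x : Gamma, x.tag = true ∧ S = Set.Ici x} ∪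
  {S | ∃ x : Gamma, x.tag = false ∧ (∃ q : ℚ, (q : ℝ) = x.re) ∧ S = Set.Iic x}

instance : TopologicalSpace Gamma := TopologicalSpace.generateFrom gammaSubbasis

/-- `Γ`-valued (finitely additive, probability) measures on a bounded lattice `D`. -/
def IsGMeasure {D : Type*} [Lattice D] [BoundedOrder D] (μ : D → Gamma) : Prop :=
  μ ⊥ = gzero ∧ μ ⊤ = gone ∧ Monotone μ ∧
  ∀ a b : D, gsub' (μ a) (μ (a ⊓ b)) ≤ gsub (μ (a ⊔ b)) (μ b) ∧
    gsub' (μ (a ⊔ b)) (μ b) ≤ gsub (μ a) (μ (a ⊓ b))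

/-- Classical finitely additive probability measures on a bounded lattice `D`. -/
def IsCMeasure {D : Type*} [Lattice D] [BoundedOrder D] (m : D → ℝ) : Prop :=
  m ⊥ = 0 ∧ m ⊤ = 1 ∧ Monotone m ∧
  ∀ a b : D, m a + m b = m (a ⊔ b) + m (a ⊓ b)


/-!
`Γ` is a complete linear order whose Priestley topology is its order topology (the subbasic sets
`↑q°` and `↓q⁻` are the rays `(q⁻, →)` and `(←, q°)`). Hence `Γ` is compact with a closed order,
the clopen up-sets `↑q°` separate its points, and all of this passes to the product `Γ^D` and its
closed subspaces. The measure axioms cut out a closed set: the equalities and monotonicity because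
the order is closed, and the two inequalities because `∸'` is lower and `∸` upper semicontinuous in
Mathlib's sense (the paper's terminology is the dual one), while `{f ≤ g}` is closed whenever `f` is
lower and `g` upper semicontinuous into a linear order.
-/

open Set Topology TopologicalSpace

theorem LowerSemicontinuous.isClosed_setOf_le {X β : Type*} [TopologicalSpace X] [LinearOrder β]
    {f g : X → β} (hf : LowerSemicontinuous f) (hg : UpperSemicontinuous g) :
    IsClosed {x | f x ≤ g x} := by
  refine isOpen_compl_iff.1 (isOpen_iff_mem_nhds.2 fun x hx => ?_)
  replace hx : g x < f x := not_le.1 hx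
  by_cases hgap : ∃ y, g x < y ∧ y < f x
  · obtain ⟨y, hgy, hyf⟩ := hgap
    filter_upwards [hg x y hgy, hf x y hyf] with x' hg' hf' using not_le.2 (hg'.trans hf')
  · push Not at hgap
    filter_upwards [hg x (f x) hx, hf x (g x) hx] with x' hg' hf'
    have hg_le : g x' ≤ g x := not_lt.1 fun h => (hgap _ h).not_gt hg'
    have hf_le : f x ≤ f x' := not_lt.1 fun h => (hgap _ hf').not_gt h
    exact not_le.2 (hg_le.trans_lt (hx.trans_le hf_le))

instance Pi.priestleySpace {ι : Type*} {π : ι → Type*} [∀ i, Preorder (π i)]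
    [∀ i, TopologicalSpace (π i)] [∀ i, PriestleySpace (π i)] : PriestleySpace (∀ i, π i) where
  priestley {x y} h := by
    obtain ⟨i, hi⟩ : ∃ i, ¬x i ≤ y i := by simpa [Pi.le_def] using h
    obtain ⟨U, hU, hUup, hx, hy⟩ := exists_isClopen_upper_of_not_le hi
    exact ⟨(fun z => z i) ⁻¹' U, hU.preimage (continuous_apply i),
      hUup.preimage fun _ _ h => h i, hx, hy⟩

instance Subtype.priestleySpace {α : Type*} [Preorder α] [TopologicalSpace α] [PriestleySpace α]
    (p : α → Prop) : PriestleySpace (Subtype p) where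
  priestley {x y} h := by
    obtain ⟨U, hU, hUup, hx, hy⟩ := exists_isClopen_upper_of_not_le (show ¬x.1 ≤ y.1 from h)
    exact ⟨Subtype.val ⁻¹' U, hU.preimage continuous_subtype_val,
      hUup.preimage fun _ _ h => h, hx, hy⟩

namespace Gamma

lemma tag_eq_true_of_re_eq_zero {x : Gamma} (h : x.re = 0) : x.tag = true := by
  cases hx : x.tag
  · exact ((tag_pos hx).ne' h).elim
  · rfl

lemma gzero_le (x : Gamma) : gzero ≤ x := by
  rcases x.re_nonneg.lt_or_eq with h | h
  · exact le_iff.2 (Or.inl h)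
  · exact le_iff.2 (Or.inr ⟨h, by rw [tag_eq_true_of_re_eq_zero h.symm]; exact Bool.le_true _⟩)

lemma le_of_re_eq_zero {v : Gamma} (hv0 : v.re = 0) (x : Gamma) : v ≤ x :=
  (ext' hv0 (tag_eq_true_of_re_eq_zero hv0) : v = gzero) ▸ gzero_le x

lemma not_le_gzero {v : Gamma} (hv0 : 0 < v.re) : ¬v ≤ gzero :=
  fun h => hv0.not_ge (re_mono h)

lemma lt_iff {x y : Gamma} :
    x < y ↔ x.re < y.re ∨ (x.re = y.re ∧ x.tag = false ∧ y.tag = true) := by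
  rw [← not_le, le_iff]
  cases x.tag <;> cases y.tag <;> simp [eq_comm] <;> grind

lemma tag_le_of_le_of_re_eq {x y : Gamma} (h : x ≤ y) (hre : x.re = y.re) : x.tag ≤ y.tag := by
  rcases le_iff.1 h with h | ⟨_, h⟩
  · exact absurd hre h.ne
  · exact h

lemma eq_of_le_of_re_eq_of_tag_true {x y : Gamma} (h : x ≤ y) (hre : x.re = y.re)
    (hx : x.tag = true) : x = y :=
  ext' hre <| by
    have := tag_le_of_le_of_re_eq h hre
    cases hy : y.tag <;> simp_all [Bool.le_iff_imp]

lemma eq_of_le_of_re_eq_of_tag_false {x y : Gamma} (h : x ≤ y) (hre : x.re = y.re)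
    (hy : y.tag = false) : x = y :=
  ext' hre <| by
    have := tag_le_of_le_of_re_eq h hre
    cases hx : x.tag <;> simp_all [Bool.le_iff_imp]

lemma covBy_of_re_eq {x y : Gamma} (hre : x.re = y.re) (hx : x.tag = false) (hy : y.tag = true) :
    x ⋖ y := by
  refine ⟨lt_iff.2 (Or.inr ⟨hre, hx, hy⟩), fun z hxz hzy => ?_⟩
  rcases lt_iff.1 hxz with h₁ | ⟨h₁, -, hz⟩ <;> rcases lt_iff.1 hzy with h₂ | ⟨h₂, hz', -⟩
  all_goals first | linarith | simp_all

lemma exists_tag_true_btwn {x y : Gamma} (h : x < y) :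
    ∃ v : Gamma, v.tag = true ∧ x < v ∧ v ≤ y := by
  rcases lt_iff.1 h with hre | ⟨-, -, hy⟩
  · obtain ⟨q, hxq, hqy⟩ := exists_rat_btwn hre
    have hq0 : (0 : ℚ) ≤ q := by exact_mod_cast x.re_nonneg.trans hxq.le
    have hq1 : q ≤ 1 := by exact_mod_cast hqy.le.trans y.re_le_one
    exact ⟨mkCirc q hq0 hq1, rfl, lt_iff.2 (Or.inl hxq), le_iff.2 (Or.inl hqy)⟩
  · exact ⟨y, hy, h, le_rfl⟩

lemma exists_ratMinus_btwn {x y : Gamma} (h : x < y) :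
    ∃ v : Gamma, (v.tag = false ∧ ∃ q : ℚ, (q : ℝ) = v.re) ∧ x ≤ v ∧ v < y := by
  rcases lt_iff.1 h with hre | ⟨hre, hx, hy⟩
  · obtain ⟨q, hxq, hqy⟩ := exists_rat_btwn hre
    exact ⟨mkMinus q (x.re_nonneg.trans_lt hxq) (hqy.le.trans y.re_le_one), ⟨rfl, q, rfl⟩,
      le_iff.2 (Or.inl hxq), lt_iff.2 (Or.inl hqy)⟩
  · exact ⟨x, ⟨hx, hre ▸ tag_rat hy⟩, le_rfl, h⟩

/-- With `s` the supremum of the real parts, the supremum is the `°`-element of `S` at height `s`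
if there is one, and `s⁻` otherwise (`0°` if `s = 0`, which forces `S = ∅`). -/
lemma exists_isLUB (S : Set Gamma) : ∃ x, IsLUB S x := by
  set s := sSup (insert 0 (re '' S))
  have hbdd : BddAbove (insert 0 (re '' S)) :=
    ⟨1, by rintro _ (rfl | ⟨x, -, rfl⟩) <;> [exact zero_le_one; exact x.re_le_one]⟩
  have hle : ∀ x ∈ S, x.re ≤ s := fun x hx => le_csSup hbdd (mem_insert_of_mem _ ⟨x, hx, rfl⟩)
  have hs0 : 0 ≤ s := le_csSup hbdd (mem_insert _ _)
  have hub : ∀ u ∈ upperBounds S, s ≤ u.re := fun u hu => csSup_le (insert_nonempty _ _) <| by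
    rintro _ (rfl | ⟨x, hx, rfl⟩) <;> [exact u.re_nonneg; exact re_mono (hu hx)]
  have hs1 : s ≤ 1 := hub gone fun x _ => le_iff.2 <| x.re_le_one.lt_or_eq.imp id
    fun h => ⟨h, Bool.le_true _⟩
  by_cases hmax : ∃ x ∈ S, x.re = s ∧ x.tag = true
  · obtain ⟨x, hxS, hxs, hx⟩ := hmax
    refine ⟨x, fun y hy => ?_, fun u hu => hu hxS⟩
    rcases (hle y hy).lt_or_eq with h | h
    · exact le_iff.2 (Or.inl (hxs ▸ h))
    · exact le_iff.2 (Or.inr ⟨h.trans hxs.symm, hx ▸ Bool.le_true _⟩)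
  push Not at hmax
  rcases hs0.lt_or_eq with hs | hs
  · refine ⟨mkMinus s hs hs1, fun y hy => ?_, fun u hu => ?_⟩
    · rcases (hle y hy).lt_or_eq with h | h
      · exact le_iff.2 (Or.inl h)
      · exact le_iff.2 (Or.inr ⟨h, by simp [Bool.eq_false_iff.2 (hmax y hy h)]⟩)
    · rcases (hub u hu).lt_or_eq with h | h
      · exact le_iff.2 (Or.inl h)
      · exact le_iff.2 (Or.inr ⟨h, Bool.false_le _⟩)
  · refine ⟨gzero, fun y hy => ?_, fun u _ => gzero_le u⟩
    have hy0 : y.re = 0 := le_antisymm (hs ▸ hle y hy) y.re_nonneg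
    exact absurd (tag_eq_true_of_re_eq_zero hy0) (hmax y hy (hy0.trans hs))

instance : SupSet Gamma := ⟨fun S => (exists_isLUB S).choose⟩

instance : CompleteLinearOrder Gamma :=
  letI C : CompleteLattice Gamma :=
    { (inferInstance : Lattice Gamma),
      completeLatticeOfSup Gamma fun S => (exists_isLUB S).choose_spec with }
  letI : BoundedOrder Gamma := { C with }
  { C, Subtype.instLinearOrder _, LinearOrder.toBiheytingAlgebra _ with }

lemma isOpen_Ici {v : Gamma} (hv : v.tag = true) : IsOpen (Ici v) :=
  GenerateOpen.basic _ (Or.inl ⟨v, hv, rfl⟩)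

lemma isOpen_Iic {v : Gamma} (hv : v.tag = false) (hq : ∃ q : ℚ, (q : ℝ) = v.re) :
    IsOpen (Iic v) :=
  GenerateOpen.basic _ (Or.inr ⟨v, hv, hq, rfl⟩)

instance : OrderTopology Gamma := by
  refine ⟨le_antisymm (le_generateFrom ?_) (le_generateFrom ?_)⟩
  · rintro s ⟨a, rfl | rfl⟩
    · rw [isOpen_iff_forall_mem_open]
      intro x hx
      obtain ⟨v, hv, hav, hvx⟩ := exists_tag_true_btwn (mem_Ioi.1 hx)
      exact ⟨Ici v, fun z hz => hav.trans_le hz, isOpen_Ici hv, hvx⟩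
    · rw [isOpen_iff_forall_mem_open]
      intro x hx
      obtain ⟨v, ⟨hv, hq⟩, hxv, hva⟩ := exists_ratMinus_btwn (mem_Iio.1 hx)
      exact ⟨Iic v, fun z hz => hz.trans_lt hva, isOpen_Iic hv hq, hxv⟩
  · rintro s (⟨v, hv, rfl⟩ | ⟨v, hv, ⟨q, hq⟩, rfl⟩)
    · rcases v.re_nonneg.lt_or_eq with h0 | h0
      · rw [← (covBy_of_re_eq (x := mkMinus v.re h0 v.re_le_one) (y := v) rfl rfl hv).Ioi_eq]
        exact GenerateOpen.basic _ ⟨_, Or.inl rfl⟩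
      · rw [show v = gzero from ext' h0.symm hv,
          eq_univ_of_forall fun x => show x ∈ Ici gzero from gzero_le x]
        exact @isOpen_univ _ (generateFrom _)
    · have hq0 : (0 : ℚ) ≤ q := by exact_mod_cast hq ▸ v.re_nonneg
      have hq1 : q ≤ 1 := by exact_mod_cast hq ▸ v.re_le_one
      rw [← (covBy_of_re_eq (y := mkCirc q hq0 hq1) hq.symm hv rfl).Iio_eq]
      exact GenerateOpen.basic _ ⟨_, Or.inr rfl⟩

lemma monotone_gammaMap : Monotone gammaMap := fun _ _ h => re_mono h

lemma gammaMap_iota (r : unitInterval) : gammaMap (iota r) = r := by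
  unfold iota; split <;> rfl

@[fun_prop]
lemma continuous_re : Continuous re :=
  continuous_subtype_val.comp <|
    monotone_gammaMap.continuous_of_surjective fun r => ⟨iota r, gammaMap_iota r⟩

lemma isClopen_Ici {v : Gamma} (hv : v.tag = true) : IsClopen (Ici v) :=
  ⟨isClosed_Ici, isOpen_Ici hv⟩

instance : PriestleySpace Gamma where
  priestley {x y} h := by
    obtain ⟨v, hv, hyv, hvx⟩ := exists_tag_true_btwn (not_le.1 h)
    exact ⟨Ici v, isClopen_Ici hv, isUpperSet_Ici v, hvx, hyv.not_ge⟩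

section Semicontinuity

variable {X : Type*} [TopologicalSpace X] {f : X → Gamma}

lemma lowerSemicontinuous_of_isOpen_preimage_Ici
    (hf : ∀ v : Gamma, v.tag = true → IsOpen (f ⁻¹' Ici v)) : LowerSemicontinuous f := by
  intro x y hy
  obtain ⟨v, hv, hyv, hvf⟩ := exists_tag_true_btwn hy
  filter_upwards [(hf v hv).mem_nhds hvf] with x' hx' using hyv.trans_le hx'

lemma upperSemicontinuous_of_isClosed_preimage_Ici
    (hf : ∀ v : Gamma, v.tag = true → IsClosed (f ⁻¹' Ici v)) : UpperSemicontinuous f := by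
  intro x y hy
  obtain ⟨v, hv, hfv, hvy⟩ := exists_tag_true_btwn hy
  filter_upwards [(hf v hv).isOpen_compl.mem_nhds hfv.not_ge] with x' hx'
  exact (not_le.1 (show ¬v ≤ f x' from hx')).trans_le hvy

end Semicontinuity

lemma le_gsub'_iff {v x y : Gamma} (hv : v.tag = true) (hv0 : 0 < v.re) :
    v ≤ gsub' x y ↔ v.re < x.re - y.re ∨
      (v.re = x.re - y.re ∧ (y.tag = false ∧ ∃ q : ℚ, (q : ℝ) = y.re) ∧ x.tag = true) := by
  by_cases hyx : y ≤ x
  · rw [gsub', dif_pos hyx, le_iff, re_mk', tag_mk', hv]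
    have : v.re = x.re - y.re → x.re - y.re ≠ 0 := fun h => h ▸ hv0.ne'
    split_ifs <;> simp_all [Bool.le_iff_imp]
  · have := re_mono (not_le.1 hyx).le
    rw [gsub', dif_neg hyx, iff_false_intro (not_le_gzero hv0), false_iff]
    rintro (h | ⟨h, -⟩) <;> linarith

lemma gsub_lt_iff {v z w : Gamma} (hv : v.tag = true) (hv0 : 0 < v.re) :
    gsub z w < v ↔ z.re - w.re < v.re ∨ (z.re - w.re = v.re ∧ w.tag = true ∧ z.tag = false) := by
  by_cases hwz : w ≤ z
  · rw [gsub, dif_pos hwz, lt_iff, re_mk', tag_mk', hv]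
    obtain ⟨q, hq⟩ := tag_rat hv
    split_ifs with hw hzw
    · simp_all
    · simp_all
    · have hne : z.re - w.re ≠ v.re := fun h => hzw ⟨q, hq.trans h.symm⟩
      simp_all
  · have := re_mono (not_le.1 hwz).le
    rw [gsub, dif_neg hwz, iff_true_intro ((gzero_le v).lt_of_ne fun h => hv0.ne (h ▸ rfl)),
      true_iff]
    exact Or.inl (by linarith)

lemma lowerSemicontinuous_gsub' :
    LowerSemicontinuous fun p : Gamma × Gamma => gsub' p.1 p.2 := by
  refine lowerSemicontinuous_of_isOpen_preimage_Ici fun v hv => ?_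
  rcases v.re_nonneg.eq_or_lt with hv0 | hv0
  · rw [show _ ⁻¹' Ici v = univ from eq_univ_of_forall fun _ => le_of_re_eq_zero hv0.symm _]
    exact isOpen_univ
  refine isOpen_iff_mem_nhds.2 fun ⟨x, y⟩ hxy => ?_
  rcases (le_gsub'_iff hv hv0).1 hxy with hlt | ⟨heq, hy, hx⟩
  · have hopen : IsOpen {p : Gamma × Gamma | v.re < p.1.re - p.2.re} :=
      isOpen_lt continuous_const (by fun_prop)
    exact Filter.mem_of_superset (hopen.mem_nhds hlt) fun p hp =>
      (le_gsub'_iff hv hv0).2 (Or.inl hp)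
  · filter_upwards [prod_mem_nhds ((isOpen_Ici hx).mem_nhds self_mem_Ici)
      ((isOpen_Iic hy.1 hy.2).mem_nhds self_mem_Iic)] with ⟨x', y'⟩ ⟨hx', hy'⟩
    have := re_mono hx'
    have := re_mono hy'
    rcases (show v.re ≤ x'.re - y'.re by linarith).lt_or_eq with hlt | heq'
    · exact (le_gsub'_iff hv hv0).2 (Or.inl hlt)
    · obtain rfl := eq_of_le_of_re_eq_of_tag_true hx' (by linarith) hx
      obtain rfl := eq_of_le_of_re_eq_of_tag_false hy' (by linarith) hy.1
      exact hxy

lemma upperSemicontinuous_gsub : UpperSemicontinuous fun p : Gamma × Gamma => gsub p.1 p.2 := by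
  refine upperSemicontinuous_of_isClosed_preimage_Ici fun v hv => ?_
  rcases v.re_nonneg.eq_or_lt with hv0 | hv0
  · rw [show _ ⁻¹' Ici v = univ from eq_univ_of_forall fun _ => le_of_re_eq_zero hv0.symm _]
    exact isClosed_univ
  refine isOpen_compl_iff.1 (isOpen_iff_mem_nhds.2 fun ⟨z, w⟩ hzw => ?_)
  replace hzw : gsub z w < v := not_le.1 hzw
  rcases (gsub_lt_iff hv hv0).1 hzw with hlt | ⟨heq, hw, hz⟩
  · have hopen : IsOpen {p : Gamma × Gamma | p.1.re - p.2.re < v.re} :=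
      isOpen_lt (by fun_prop) continuous_const
    exact Filter.mem_of_superset (hopen.mem_nhds hlt) fun p hp =>
      ((gsub_lt_iff hv hv0).2 (Or.inl hp)).not_ge
  · obtain ⟨q, hq⟩ : ∃ q : ℚ, (q : ℝ) = z.re := by
      obtain ⟨qv, hqv⟩ := tag_rat hv
      obtain ⟨qw, hqw⟩ := tag_rat hw
      exact ⟨qv + qw, by push_cast; linarith⟩
    filter_upwards [prod_mem_nhds ((isOpen_Iic hz ⟨q, hq⟩).mem_nhds self_mem_Iic)
      ((isOpen_Ici hw).mem_nhds self_mem_Ici)] with ⟨z', w'⟩ ⟨hz', hw'⟩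
    have := re_mono hz'
    have := re_mono hw'
    rcases (show z'.re - w'.re ≤ v.re by linarith).lt_or_eq with hlt | heq'
    · exact ((gsub_lt_iff hv hv0).2 (Or.inl hlt)).not_ge
    · obtain rfl := eq_of_le_of_re_eq_of_tag_false hz' (by linarith) hz
      obtain rfl := eq_of_le_of_re_eq_of_tag_true hw' (by linarith) hw
      exact hzw.not_ge

theorem isClosed_setOf_gsub'_le_gsub {X : Type*} [TopologicalSpace X]
    {f g h k : X → Gamma}
    (hf : Continuous f) (hg : Continuous g) (hh : Continuous h) (hk : Continuous k) :
    IsClosed {x | gsub' (f x) (g x) ≤ gsub (h x) (k x)} :=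
  (lowerSemicontinuous_gsub'.comp (hf.prodMk hg)).isClosed_setOf_le
    (upperSemicontinuous_gsub.comp (hh.prodMk hk))

end Gamma

theorem isClosed_setOf_isGMeasure (D : Type*) [Lattice D] [BoundedOrder D] :
    IsClosed {μ : D → Gamma | IsGMeasure μ} := by
  simp only [IsGMeasure, ofPred_and, ofPred_forall]
  refine (isClosed_eq (continuous_apply ⊥) continuous_const).inter <|
    (isClosed_eq (continuous_apply ⊤) continuous_const).inter <| isClosed_monotone.inter <|
      isClosed_iInter fun a => isClosed_iInter fun b => .inter ?_ ?_ <;>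
  exact Gamma.isClosed_setOf_gsub'_le_gsub (continuous_apply _) (continuous_apply _)
    (continuous_apply _) (continuous_apply _)

/-- for every (bounded) distributive lattice `D`, the set of `Γ`-valued
measures on `D` is closed in the product space `Γ^D`, and hence is itself a Priestley
space: compact, with closed order, and totally order-disconnected. -/
theorem measures_closed_priestley (D : Type*) [DistribLattice D] [BoundedOrder D] :
    IsClosed {μ : D → Gamma | IsGMeasure μ} ∧
    CompactSpace {μ : D → Gamma // IsGMeasure μ} ∧
    IsClosed {p : {μ : D → Gamma // IsGMeasure μ} × {μ : D → Gamma // IsGMeasure μ} |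
      p.1 ≤ p.2} ∧
    ∀ μ ν : {μ : D → Gamma // IsGMeasure μ}, ¬ μ ≤ ν →
      ∃ C : Set {μ : D → Gamma // IsGMeasure μ}, IsClopen C ∧ IsUpperSet C ∧ μ ∈ C ∧ ν ∉ C := by
  have hclosed := isClosed_setOf_isGMeasure D
  exact ⟨hclosed, isCompact_iff_compactSpace.1 hclosed.isCompact,
    OrderClosedTopology.isClosed_le', fun _ _ => exists_isClopen_upper_of_not_le⟩
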